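/- For every partial Boolean function f : Dom(f) → {0,1} with Dom(f) ⊆ {0,1}^n, deterministic sabotage complexity equals deterministic query complexity: DS(f) = D(f), where DS(f) := D(f_sab). -/

import Mathlib

/-! ### Decision trees -/

/-- A deterministic decision tree querying positions of type `ι`, receiving answers
in `α`, and producing an output in `β`. -/
inductive DTree (ι α β : Type) : Type
  | leaf (b : β) : DTree ι α β
  | node (i : ι) (next : α → DTree ι α β) : DTree ι α β

namespace DTree

variable {ι α β : Type}

/-- The output of a decision tree on input `x`. -/
def output : DTree ι α β → (ι → α) → β
  | leaf b, _ => b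
  | node i next, x => (next (x i)).output x

/-- The number of queries made by a decision tree on input `x`. -/
def cost : DTree ι α β → (ι → α) → ℕ
  | leaf _, _ => 0
  | node i next, x => (next (x i)).cost x + 1

/-- The set of positions queried by a decision tree on input `x`. -/
def queries : DTree ι α β → (ι → α) → Set ι
  | leaf _, _ => ∅
  | node i next, x => insert i ((next (x i)).queries x)

end DTree

/-- A partial function on inputs `ι → α` with outputs in `β`; `none` means undefined
(the domain is the set of inputs mapped to `some` value). -/
abbrev PFn (ι α β : Type) := (ι → α) → Option β

/-- `t` computes the partial function `f` (correct on every input of the domain). -/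
def DTree.computesP {ι α β : Type} (t : DTree ι α β) (f : PFn ι α β) : Prop :=
  ∀ x b, f x = some b → t.output x = b

/-- Deterministic query complexity `D(f)`. -/
noncomputable def Dq {ι α β : Type} (f : PFn ι α β) : ℝ :=
  sInf {T : ℝ | 0 ≤ T ∧ ∃ t : DTree ι α β, t.computesP f ∧ ∀ x, (t.cost x : ℝ) ≤ T}

/-! ### Randomized query algorithms -/

/-- A randomized query algorithm: a finitely supported probability distribution over
deterministic decision trees. -/
structure RandAlg (ι α β : Type) where
  Ω : Type
  [fin : Fintype Ω]
  p : Ω → ℝ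
  nonneg : ∀ ω, 0 ≤ p ω
  sum_one : ∑ ω, p ω = 1
  tree : Ω → DTree ι α β

namespace RandAlg

variable {ι α β : Type}

/-- Expected number of queries of `A` on input `x`. -/
noncomputable def expCost (A : RandAlg ι α β) (x : ι → α) : ℝ :=
  letI := A.fin
  ∑ ω, A.p ω * ((A.tree ω).cost x : ℝ)

open Classical in
/-- Probability that `A` outputs `b` on input `x`. -/
noncomputable def succProb (A : RandAlg ι α β) (x : ι → α) (b : β) : ℝ :=
  letI := A.fin
  ∑ ω, if (A.tree ω).output x = b then A.p ω else 0

/-- `A` computes `f` with error at most `ε`: on every input of the domain the correct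
output is produced with probability at least `1 - ε`. -/
def Computes (A : RandAlg ι α β) (f : PFn ι α β) (ε : ℝ) : Prop :=
  ∀ x b, f x = some b → 1 - ε ≤ A.succProb x b

/-- The worst-case cost of `A` (over all inputs and all trees in the support) is at most `T`. -/
def WCostLe (A : RandAlg ι α β) (T : ℝ) : Prop :=
  ∀ ω, A.p ω ≠ 0 → ∀ x, ((A.tree ω).cost x : ℝ) ≤ T

/-- The expected cost of `A` on every input of the domain of `f` is at most `T`. -/
def ECostLe (A : RandAlg ι α β) (f : PFn ι α β) (T : ℝ) : Prop :=
  ∀ x, (f x).isSome → A.expCost x ≤ T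

end RandAlg

/-- `R_ε(f)`: minimum worst-case cost of an `ε`-error randomized algorithm for `f`. -/
noncomputable def Rw {ι α β : Type} (ε : ℝ) (f : PFn ι α β) : ℝ :=
  sInf {T : ℝ | 0 ≤ T ∧ ∃ A : RandAlg ι α β, A.Computes f ε ∧ A.WCostLe T}

/-- `R̄_ε(f)`: minimum expected cost of an `ε`-error randomized algorithm for `f`. -/
noncomputable def Rbar {ι α β : Type} (ε : ℝ) (f : PFn ι α β) : ℝ :=
  sInf {T : ℝ | 0 ≤ T ∧ ∃ A : RandAlg ι α β, A.Computes f ε ∧ A.ECostLe f T}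

/-- `R₀(f)`: zero-error expected randomized query complexity. -/
noncomputable def R0 {ι α β : Type} (f : PFn ι α β) : ℝ := Rbar 0 f

/-- `R(f) := R_{1/3}(f)`: bounded-error randomized query complexity. -/
noncomputable def Rb {ι α β : Type} (f : PFn ι α β) : ℝ := Rw (1/3) f

/-- The total function `f` viewed as a partial function. -/
def tot {ι α β : Type} (f : (ι → α) → β) : PFn ι α β := fun x => some (f x)


/-! ### Sabotage complexity and composition -/

/-- The four-letter alphabet `{0, 1, *, †}` of sabotaged inputs. -/
inductive Sab : Type
  | zero : Sab
  | one : Sab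
  | star : Sab
  | dagger : Sab
deriving DecidableEq

/-- Embedding of Boolean values into the sabotage alphabet. -/
def Sab.ofBool : Bool → Sab
  | false => Sab.zero
  | true => Sab.one

/-- `p` is consistent with the Boolean input `x`: wherever `p` has a Boolean entry,
it agrees with `x`. -/
def SabConsistent {ι : Type} (p : ι → Sab) (x : ι → Bool) : Prop :=
  ∀ i, p i = Sab.ofBool (x i) ∨ p i = Sab.star ∨ p i = Sab.dagger

/-- `p` is a sabotaged input for `f` using the sabotage symbol `s`: all entries of `p`
lie in `{0, 1, s}` and `p` is consistent with both a `0`-input and a `1`-input of `f`. -/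
def IsSabotaged {ι : Type} (f : PFn ι Bool Bool) (s : Sab) (p : ι → Sab) : Prop :=
  (∀ i, p i = Sab.zero ∨ p i = Sab.one ∨ p i = s) ∧
  ∃ x y, (f x).isSome ∧ (f y).isSome ∧ f x ≠ f y ∧ SabConsistent p x ∧ SabConsistent p y

open Classical in
/-- The sabotage problem `f_sab` associated with `f`: it is `0` on `P_f` (inputs
sabotaged with `*`) and `1` on `P_f†` (inputs sabotaged with `†`). -/
noncomputable def fsab {ι : Type} (f : PFn ι Bool Bool) : PFn ι Sab Bool :=
  fun p =>
    if IsSabotaged f Sab.star p then some false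
    else if IsSabotaged f Sab.dagger p then some true
    else none

open Classical in
/-- `f_usab`: the restriction of `f_sab` to inputs having exactly one `*` or `†` entry. -/
noncomputable def fusab {ι : Type} (f : PFn ι Bool Bool) : PFn ι Sab Bool :=
  fun p =>
    if ∃! i, p i = Sab.star ∨ p i = Sab.dagger then fsab f p else none

/-- Randomized sabotage complexity `RS(f) := R₀(f_sab)`. -/
noncomputable def RS {ι : Type} (f : PFn ι Bool Bool) : ℝ := R0 (fsab f)

/-- `RS_u(f) := R₀(f_usab)` (this is `0` automatically when `f_usab` has empty domain). -/
noncomputable def RSu {ι : Type} (f : PFn ι Bool Bool) : ℝ := R0 (fusab f)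

open Classical in
/-- Composition `f ∘ g` of partial functions: defined on an input exactly when every
inner copy of `g` is defined and the tuple of inner values lies in the domain of `f`. -/
noncomputable def pcomp {κ ι α β γ : Type} (f : PFn κ β γ) (g : PFn ι α β) :
    PFn (κ × ι) α γ :=
  fun x =>
    if h : ∀ i : κ, (g fun j => x (i, j)).isSome then
      f fun i => (g fun j => x (i, j)).get (h i)
    else none

/-- Index types for iterated self-composition. -/
def IterIdx (κ : Type) : ℕ → Type
  | 0 => κ
  | n + 1 => κ × IterIdx κ n

/-- `iterComp f n` is `f` composed with itself `n + 1` times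
(`iterComp f 0 = f`, `iterComp f (n+1) = f ∘ iterComp f n`). -/
noncomputable def iterComp {κ : Type} (f : PFn κ Bool Bool) : (n : ℕ) → PFn (IterIdx κ n) Bool Bool
  | 0 => f
  | n + 1 => pcomp f (iterComp f n)

/-! ### The index function -/

/-- The value of a bit-string read as a binary number (bit `i` has weight `2^i`). -/
def binval {b : ℕ} (x : Fin b → Bool) : ℕ := ∑ i, if x i then 2 ^ (i : ℕ) else 0

theorem sum_range_two_pow (b : ℕ) : ∑ i ∈ Finset.range b, 2 ^ i = 2 ^ b - 1 := by
  induction b with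
  | zero => simp
  | succ n ih =>
    rw [Finset.sum_range_succ, ih, pow_succ]
    have : 1 ≤ 2 ^ n := Nat.one_le_two_pow
    omega

theorem binval_lt {b : ℕ} (x : Fin b → Bool) : binval x < 2 ^ b := by
  have h1 : binval x ≤ ∑ i : Fin b, 2 ^ (i : ℕ) := by
    refine Finset.sum_le_sum fun i _ => ?_
    split <;> simp
  have h2 : ∑ i : Fin b, 2 ^ (i : ℕ) = 2 ^ b - 1 := by
    rw [Fin.sum_univ_eq_sum_range (fun i => 2 ^ i) b]
    exact sum_range_two_pow b
  have h3 : 0 < 2 ^ b := Nat.pow_pos (by norm_num)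
  omega

/-- The largest `c` with `c + 2^c ≤ m`. -/
def indexC (m : ℕ) : ℕ := Nat.findGreatest (fun c => c + 2 ^ c ≤ m) m

/-- The index function `Ind_m : {0,1}^m → {0,1}`: the first `c` bits (where `c` is the
largest integer with `c + 2^c ≤ m`) are read as a binary address `y` into the next
`2^c` bits, and the output is the addressed bit. -/
def IndFn (m : ℕ) : PFn (Fin m) Bool Bool :=
  fun x =>
    let c := indexC m
    let y := ∑ i : Fin m, if (i : ℕ) < c ∧ x i = true then 2 ^ (i : ℕ) else 0
    if h : c + y < m then some (x ⟨c + y, h⟩) else none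

/-- `f^{⊕c}_ind`: the index function on `c + 2^c` bits with `f` composed into each of
the `c` address bits only. -/
def findex {n : ℕ} (f : PFn (Fin n) Bool Bool) (c : ℕ) :
    PFn ((Fin c × Fin n) ⊕ Fin (2 ^ c)) Bool Bool :=
  fun x =>
    if h : ∀ i : Fin c, (f fun j => x (Sum.inl (i, j))).isSome then
      some (x (Sum.inr ⟨binval fun i => (f fun j => x (Sum.inl (i, j))).get (h i),
        binval_lt _⟩))
    else none

/-!
A tree for `f_sab` yields a tree for `f`: if two domain inputs with different values agreed on
all positions the tree queries on the first one, filling the unqueried positions of the first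
with `*`, respectively with `†`, would give an input of `P_f` and one of `P_f†` on which the
tree runs along the same path, which is impossible. So the leaves of the tree, read on Boolean
inputs, separate the values of `f`. Conversely, a tree for `f` answers `f_sab` by answering `0`
as soon as it reads a `*` and `1` as soon as it reads a `†`; if it never reads one, it ends at a
leaf reached by both a `0`-input and a `1`-input of `f`, a contradiction.
-/

namespace DTree

variable {ι α β : Type}

theorem output_congr (t : DTree ι α β) {x y : ι → α} (h : ∀ i ∈ t.queries x, x i = y i) :
    t.output x = t.output y := by
  induction t with
  | leaf b => rfl
  | node i next ih =>
    have hi : x i = y i := h i (Set.mem_insert i _)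
    simp only [output, ← hi]
    exact ih (x i) fun j hj => h j (Set.mem_insert_of_mem i hj)

theorem computesP.output_ne {γ : Type} {t : DTree ι α γ} {f : PFn ι α γ} (ht : t.computesP f)
    {x y : ι → α} (hx : (f x).isSome) (hy : (f y).isSome) (hne : f x ≠ f y) :
    t.output x ≠ t.output y := by
  obtain ⟨bx, hbx⟩ := Option.isSome_iff_exists.mp hx
  obtain ⟨c, hc⟩ := Option.isSome_iff_exists.mp hy
  rw [ht x bx hbx, ht y c hc]
  rintro rfl
  exact hne (hbx.trans hc.symm)

def comap {α' : Type} (g : α' → α) : DTree ι α β → DTree ι α' β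
  | leaf b => leaf b
  | node i next => node i fun a => (next (g a)).comap g

@[simp]
theorem cost_comap {α' : Type} (g : α' → α) (t : DTree ι α β) (x : ι → α') :
    (t.comap g).cost x = t.cost (g ∘ x) := by
  induction t with
  | leaf b => rfl
  | node i next ih => simp only [comap, cost, ih, Function.comp_apply]

@[simp]
theorem queries_comap {α' : Type} (g : α' → α) (t : DTree ι α β) (x : ι → α') :
    (t.comap g).queries x = t.queries (g ∘ x) := by
  induction t with
  | leaf b => rfl
  | node i next ih => simp only [comap, queries, ih, Function.comp_apply]

def Separates {γ : Type} (t : DTree ι α β) (f : PFn ι α γ) : Prop :=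
  ∀ x y bx by', f x = some bx → f y = some by' → (∀ i ∈ t.queries x, x i = y i) → bx = by'

theorem Separates.exists_computesP {γ : Type} [Nonempty γ] {t : DTree ι α β}
    {f : PFn ι α γ} (ht : t.Separates f) :
    ∃ t' : DTree ι α γ, t'.computesP f ∧ ∀ x, t'.cost x = t.cost x := by
  classical
  induction t generalizing f with
  | leaf b =>
    by_cases hdom : ∃ x c, f x = some c
    · obtain ⟨x₀, c₀, h₀⟩ := hdom
      exact ⟨leaf c₀, fun x c hx => ht x₀ x c₀ c h₀ hx (by simp [queries]), fun _ => rfl⟩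
    · push Not at hdom
      exact ⟨leaf (Classical.arbitrary γ), fun x c hx => absurd hx (hdom x c), fun _ => rfl⟩
  | node i next ih =>
    -- the branch `a` only has to be correct on the inputs `x` with `x i = a`
    have hbranch : ∀ a, ∃ t' : DTree ι α γ,
        t'.computesP (fun x => if x i = a then f x else none) ∧
          ∀ x, t'.cost x = (next a).cost x := by
      refine fun a => ih a fun x y bx by' hx hy hxy => ?_
      by_cases hxa : x i = a
      · by_cases hya : y i = a
        · simp only [hxa, hya, if_true] at hx hy
          refine ht x y bx by' hx hy fun j hj => ?_
          rcases hj with rfl | hj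
          · exact hxa.trans hya.symm
          · exact hxy j (hxa ▸ hj)
        · simp [hya] at hy
      · simp [hxa] at hx
    choose branch hcomp hcost using hbranch
    refine ⟨node i branch, fun x c hx => ?_, fun x => ?_⟩
    · exact hcomp (x i) x c (by simpa using hx)
    · simp only [cost, hcost]

end DTree

def TreeReduces {ι α β ι' α' β' : Type} (f : PFn ι α β) (g : PFn ι' α' β') : Prop :=
  ∀ t : DTree ι α β, t.computesP f →
    ∃ t' : DTree ι' α' β', t'.computesP g ∧ ∀ x', ∃ x, t'.cost x' ≤ t.cost x

theorem TreeReduces.costBounds_subset {ι α β ι' α' β' : Type} {f : PFn ι α β}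
    {g : PFn ι' α' β'} (h : TreeReduces f g) :
    {T : ℝ | 0 ≤ T ∧ ∃ t : DTree ι α β, t.computesP f ∧ ∀ x, (t.cost x : ℝ) ≤ T} ⊆
      {T : ℝ | 0 ≤ T ∧ ∃ t : DTree ι' α' β', t.computesP g ∧ ∀ x, (t.cost x : ℝ) ≤ T} := by
  rintro T ⟨hT, t, ht, hcost⟩
  obtain ⟨t', ht', hcost'⟩ := h t ht
  refine ⟨hT, t', ht', fun x' => ?_⟩
  obtain ⟨x, hx⟩ := hcost' x'
  exact (Nat.cast_le.mpr hx).trans (hcost x)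

theorem Dq_eq_of_treeReduces {ι α β ι' α' β' : Type} {f : PFn ι α β} {g : PFn ι' α' β'}
    (hfg : TreeReduces f g) (hgf : TreeReduces g f) : Dq f = Dq g :=
  congrArg sInf (hfg.costBounds_subset.antisymm hgf.costBounds_subset)

section Sabotage

variable {ι : Type}

theorem SabConsistent.eq_of_eq_ofBool {p : ι → Sab} {x : ι → Bool} (h : SabConsistent p x)
    {i : ι} {b : Bool} (hb : p i = Sab.ofBool b) : x i = b := by
  rcases h i with h | h | h <;> rw [hb] at h <;> cases b <;> cases hx : x i <;>
    simp_all [Sab.ofBool]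

theorem isSabotaged_of_fsab_eq_some {f : PFn ι Bool Bool} {p : ι → Sab} {b : Bool}
    (h : fsab f p = some b) : IsSabotaged f (if b then Sab.dagger else Sab.star) p := by
  unfold fsab at h
  split_ifs at h with hstar hdagger <;> cases h
  · exact hstar
  · exact hdagger

theorem fsab_eq_some_false {f : PFn ι Bool Bool} {p : ι → Sab}
    (h : IsSabotaged f Sab.star p) : fsab f p = some false := by
  simp [fsab, h]

theorem fsab_eq_some_true {f : PFn ι Bool Bool} {p : ι → Sab}
    (h : IsSabotaged f Sab.dagger p) {i : ι} (hi : p i = Sab.dagger) : fsab f p = some true := by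
  have hstar : ¬ IsSabotaged f Sab.star p := fun h' => by simpa [hi] using h'.1 i
  simp [fsab, hstar, h]

theorem isSabotaged_fill {f : PFn ι Bool Bool} {x y : ι → Bool} (hx : (f x).isSome)
    (hy : (f y).isSome) (hne : f x ≠ f y) {Q : Set ι} [DecidablePred (· ∈ Q)]
    (hxy : ∀ i ∈ Q, x i = y i) {s : Sab} (hs : s = Sab.star ∨ s = Sab.dagger) :
    IsSabotaged f s fun i => if i ∈ Q then Sab.ofBool (x i) else s := by
  refine ⟨fun i => ?_, x, y, hx, hy, hne, fun i => ?_, fun i => ?_⟩ <;> dsimp only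
  · split_ifs
    · cases x i <;> simp [Sab.ofBool]
    · simp
  · split_ifs <;> tauto
  · split_ifs with hi
    · exact Or.inl (by rw [hxy i hi])
    · tauto

theorem separates_of_computesP_fsab {f : PFn ι Bool Bool} {t : DTree ι Sab Bool}
    (ht : t.computesP (fsab f)) : (t.comap Sab.ofBool).Separates f := by
  classical
  intro x y bx by' hx hy hxy
  rw [DTree.queries_comap] at hxy
  by_contra hne
  set Q := t.queries (Sab.ofBool ∘ x)
  have hfne : f x ≠ f y := by simpa [hx, hy] using hne
  obtain ⟨i₀, hi₀⟩ : ∃ i, i ∉ Q := by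
    by_contra! hall
    exact hfne (congrArg f (funext fun i => hxy i (hall i)))
  let fill (s : Sab) : ι → Sab := fun i => if i ∈ Q then Sab.ofBool (x i) else s
  have hsab (s : Sab) (hs : s = Sab.star ∨ s = Sab.dagger) : IsSabotaged f s (fill s) :=
    isSabotaged_fill (by simp [hx]) (by simp [hy]) hfne hxy hs
  have hrun (s : Sab) : t.output (Sab.ofBool ∘ x) = t.output (fill s) :=
    t.output_congr fun i hi => by simp only [fill, if_pos (show i ∈ Q from hi), Function.comp_apply]
  have hfalse := ht _ _ (fsab_eq_some_false (hsab _ (Or.inl rfl)))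
  have htrue := ht _ _ (fsab_eq_some_true (hsab _ (Or.inr rfl)) (i := i₀) (by simp [fill, hi₀]))
  rw [← hrun] at hfalse htrue
  exact Bool.false_ne_true (hfalse.symm.trans htrue)

def DTree.sabotage : DTree ι Bool Bool → DTree ι Sab Bool
  | .leaf b => .leaf b
  | .node i next => .node i fun
      | .zero => (next false).sabotage
      | .one => (next true).sabotage
      | .star => .leaf false
      | .dagger => .leaf true

theorem DTree.cost_sabotage_le (t : DTree ι Bool Bool) (p : ι → Sab) :
    t.sabotage.cost p ≤ t.cost fun i => p i = Sab.one := by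
  induction t with
  | leaf b => simp [sabotage, cost]
  | node i next ih =>
    simp only [sabotage, cost]
    cases hpi : p i
    · simpa [hpi] using ih false
    · simpa [hpi] using ih true
    all_goals simp [cost]

theorem DTree.output_sabotage (t : DTree ι Bool Bool) {p : ι → Sab} {s : Sab}
    (hp : ∀ i, p i = Sab.zero ∨ p i = Sab.one ∨ p i = s) {x y : ι → Bool}
    (hx : SabConsistent p x) (hy : SabConsistent p y) (hne : t.output x ≠ t.output y) :
    t.sabotage.output p = decide (s = Sab.dagger) := by
  induction t with
  | leaf b => exact absurd rfl hne
  | node i next ih =>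
    have hbool (b : Bool) (hb : p i = Sab.ofBool b) :
        (next b).sabotage.output p = decide (s = Sab.dagger) := by
      refine ih b ?_
      simpa only [output, hx.eq_of_eq_ofBool hb, hy.eq_of_eq_ofBool hb] using hne
    cases hpi : p i
    · simpa [sabotage, output, hpi] using hbool false hpi
    · simpa [sabotage, output, hpi] using hbool true hpi
    all_goals
      obtain rfl : s = p i := by rcases hp i with h | h | h <;> simp_all
      simp [sabotage, output, hpi]

theorem treeReduces_fsab (f : PFn ι Bool Bool) : TreeReduces (fsab f) f := by
  intro t ht
  obtain ⟨t', ht', hcost⟩ := (separates_of_computesP_fsab ht).exists_computesP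
  exact ⟨t', ht', fun x => ⟨Sab.ofBool ∘ x, by simp [hcost]⟩⟩

theorem treeReduces_to_fsab (f : PFn ι Bool Bool) : TreeReduces f (fsab f) := by
  refine fun t ht => ⟨t.sabotage, fun p b hb => ?_, fun p => ⟨_, t.cost_sabotage_le p⟩⟩
  obtain ⟨hp, x, y, hxs, hys, hne, hx, hy⟩ := isSabotaged_of_fsab_eq_some hb
  rw [t.output_sabotage hp hx hy (ht.output_ne hxs hys hne)]
  cases b <;> rfl

end Sabotage

/-- **Deterministic sabotage complexity equals deterministic query complexity:**
`DS(f) = D(f)` for every partial Boolean function `f`, where `DS(f) := D(f_sab)`. -/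
theorem DS_eq_D {n : ℕ} (f : PFn (Fin n) Bool Bool) :
    Dq (fsab f) = Dq f :=
  Dq_eq_of_treeReduces (treeReduces_fsab f) (treeReduces_to_fsab f)
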